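/- arXiv:1503.01043 — 2 statements merged into one kernel-verified Lean document; each statement's English description precedes it below -/
import Mathlib

section
/- Let Φ be a root system with base Δ and Weyl group W, and let S ⊆ Δ. If R ⊆ Φ⁺ is a set of positive roots and w ∈ W satisfies w(Φ^rad(S)) = R, then R = Φ^rad(S). In other words, Φ^rad(S) is not W-conjugate to any other subset of positive roots. -/
set_option autoImplicit false

open Module

variable {V : Type*} [DecidableEq V] [NormedAddCommGroup V] [InnerProductSpace ℝ V] [FiniteDimensional ℝ V]

/-- The orthogonal reflection `s_α` in the hyperplane orthogonal to `α`, as a linear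
automorphism of `V`. -/
noncomputable def simpleReflection (α : V) : V ≃ₗ[ℝ] V :=
  (Submodule.reflection ((Submodule.span ℝ {α})ᗮ)).toLinearEquiv

/-- `x` is a nonnegative integer combination of the elements of `Δ`. -/
def IsNNComb (Δ : Finset V) (x : V) : Prop :=
  ∃ c : V → ℕ, x = ∑ a ∈ Δ, (c a : ℝ) • a

/-- The positive roots of `Φ` with respect to the base `Δ`. -/
def posRoots (Φ : Set V) (Δ : Finset V) : Set V := {γ ∈ Φ | IsNNComb Δ γ}

/-- `Φ^rad(S)`: the positive roots that are not nonnegative integer combinations of the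
simple roots not in `S`. -/
def phiRad (Φ : Set V) (Δ S : Finset V) : Set V :=
  {γ ∈ posRoots Φ Δ | ¬ IsNNComb (Δ \ S) γ}

/-- The subgroup of `GL(V)` generated by the reflections `s_α` for `α ∈ I`; for `I = Δ`
this is the Weyl group `W`, and for `I ⊆ Δ` it is the standard parabolic subgroup `W_I`. -/
noncomputable def weylSubgroup (I : Finset V) : Subgroup (V ≃ₗ[ℝ] V) :=
  Subgroup.closure {w | ∃ α ∈ I, w = simpleReflection α}

/-! Write `w` as a word in the simple reflections and induct on its length. Let `a` be the last
letter. If `w a` is positive, the remaining prefix sends `a` to a negative root, and the deletion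
condition gives a shorter word for `w`. If `w a` is negative, then `a ∉ S`, because the simple
roots of `S` lie in `Φ^rad(S)` and are sent to positive roots; a simple reflection `s_a` with
`a ∉ S` only changes the `a`-coefficient of a root, so it permutes `Φ^rad(S)`, and the shorter
word `w s_a` still sends `Φ^rad(S)` to positive roots. Hence `w` maps the finite set `Φ^rad(S)`
into itself, and being injective, onto itself. -/

open Set Submodule

variable {E : Type*} [NormedAddCommGroup E] [InnerProductSpace ℝ E]

theorem simpleReflection_apply (α x : E) :
    simpleReflection α x = x - (2 * (inner ℝ α x / inner ℝ α α)) • α := by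
  change reflection (ℝ ∙ α)ᗮ x = _
  rw [reflection_orthogonal_apply, reflection_singleton_apply, real_inner_self_eq_norm_sq]
  module

theorem simpleReflection_self (α : E) : simpleReflection α α = -α :=
  reflection_orthogonalComplement_singleton_eq_neg α

theorem simpleReflection_mul_self (α : E) : simpleReflection α * simpleReflection α = 1 :=
  LinearEquiv.ext fun x => reflection_reflection (ℝ ∙ α)ᗮ x

theorem simpleReflection_inv (α : E) : (simpleReflection α)⁻¹ = simpleReflection α :=
  inv_eq_of_mul_eq_one_right (simpleReflection_mul_self α)

theorem sub_simpleReflection_mem_span (α x : E) : x - simpleReflection α x ∈ ℝ ∙ α :=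
  mem_span_singleton.mpr ⟨_, by rw [simpleReflection_apply, sub_sub_cancel]⟩

theorem simpleReflection_smul {t : ℝ} (ht : t ≠ 0) (α : E) :
    simpleReflection (t • α) = simpleReflection α := by
  simp only [simpleReflection, span_singleton_smul_eq (IsUnit.mk0 t ht)]

theorem simpleReflection_map_mul (g : E ≃ₗ[ℝ] E)
    (hg : ∀ x y, inner ℝ (g x) (g y) = inner ℝ x y) (α : E) :
    simpleReflection (g α) * g = g * simpleReflection α := by
  ext x
  simp only [LinearEquiv.mul_apply, simpleReflection_apply, hg, map_sub, map_smul]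

theorem simpleReflection_mem_weylSubgroup {I : Finset E} {a : E} (ha : a ∈ I) :
    simpleReflection a ∈ weylSubgroup I :=
  Subgroup.subset_closure ⟨a, ha, rfl⟩

theorem inner_map_map_of_mem_weylSubgroup {I : Finset E} {w : E ≃ₗ[ℝ] E}
    (hw : w ∈ weylSubgroup I) (x y : E) : inner ℝ (w x) (w y) = inner ℝ x y := by
  induction hw using Subgroup.closure_induction generalizing x y with
  | mem _ h =>
    obtain ⟨a, -, rfl⟩ := h
    exact LinearIsometryEquiv.inner_map_map _ x y
  | one => rfl
  | mul u v _ _ hu hv => rw [LinearEquiv.mul_apply, LinearEquiv.mul_apply, hu, hv]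
  | inv u _ hu => rw [← hu, LinearEquiv.coe_inv, u.apply_symm_apply, u.apply_symm_apply]

noncomputable def wordProd (l : List E) : E ≃ₗ[ℝ] E := (l.map simpleReflection).prod

@[simp]
theorem wordProd_nil : wordProd ([] : List E) = 1 := rfl

@[simp]
theorem wordProd_cons (a : E) (l : List E) :
    wordProd (a :: l) = simpleReflection a * wordProd l := by
  simp [wordProd]

@[simp]
theorem wordProd_append (l₁ l₂ : List E) : wordProd (l₁ ++ l₂) = wordProd l₁ * wordProd l₂ := by
  simp [wordProd]

theorem wordProd_reverse (l : List E) : wordProd l.reverse = (wordProd l)⁻¹ := by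
  simp [wordProd, List.prod_inv_reverse, Function.comp_def, simpleReflection_inv, List.map_reverse]

theorem wordProd_mem_weylSubgroup {I : Finset E} {l : List E} (hl : ∀ a ∈ l, a ∈ I) :
    wordProd l ∈ weylSubgroup I := by
  induction l with
  | nil => exact Subgroup.one_mem _
  | cons a l ih =>
    rw [wordProd_cons]
    exact mul_mem (simpleReflection_mem_weylSubgroup (hl a List.mem_cons_self))
      (ih fun b hb => hl b (List.mem_cons_of_mem a hb))

theorem exists_wordProd_eq {I : Finset E} {w : E ≃ₗ[ℝ] E} (hw : w ∈ weylSubgroup I) :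
    ∃ l : List E, (∀ a ∈ l, a ∈ I) ∧ wordProd l = w := by
  induction hw using Subgroup.closure_induction with
  | mem _ h =>
    obtain ⟨a, ha, rfl⟩ := h
    exact ⟨[a], by simpa using ha, by simp⟩
  | one => exact ⟨[], by simp, rfl⟩
  | mul _ _ _ _ h₁ h₂ =>
    obtain ⟨l₁, hl₁, rfl⟩ := h₁
    obtain ⟨l₂, hl₂, rfl⟩ := h₂
    exact ⟨l₁ ++ l₂, fun a ha => (List.mem_append.mp ha).elim (hl₁ a) (hl₂ a), by simp⟩
  | inv _ _ h =>
    obtain ⟨l, hl, rfl⟩ := h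
    exact ⟨l.reverse, fun a ha => hl a (List.mem_reverse.mp ha), wordProd_reverse l⟩

theorem IsNNComb.zero (Δ : Finset E) : IsNNComb Δ 0 :=
  ⟨0, by simp⟩

theorem IsNNComb.of_mem [DecidableEq E] {Δ : Finset E} {a : E} (ha : a ∈ Δ) : IsNNComb Δ a :=
  ⟨Pi.single a 1, by simp [Pi.single_apply, ha]⟩

theorem IsNNComb.mem_span {T : Finset E} {x : E} (hx : IsNNComb T x) : x ∈ span ℝ (T : Set E) := by
  obtain ⟨c, rfl⟩ := hx
  exact sum_mem fun a ha => smul_mem _ _ (subset_span ha)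

/-- Outside `T` the coefficients of `x` and `y` sum to zero, and both are nonnegative. -/
theorem IsNNComb.of_add_mem_span {Δ T : Finset E} (hind : LinearIndepOn ℝ id (Δ : Set E))
    (hT : T ⊆ Δ) {x y : E} (hx : IsNNComb Δ x) (hy : IsNNComb Δ y)
    (hxy : x + y ∈ span ℝ (T : Set E)) : IsNNComb T x := by
  obtain ⟨c, rfl⟩ := hx
  obtain ⟨d, rfl⟩ := hy
  obtain ⟨f, hfT, hf⟩ := mem_span_finset.mp hxy
  have hf_out : ∀ a, a ∉ T → f a = 0 := fun a haT => Function.notMem_support.mp fun h => haT (hfT h)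
  have hfΔ : ∑ a ∈ Δ, f a • a = ∑ a ∈ T, f a • a :=
    (Finset.sum_subset hT fun a _ haT => by rw [hf_out a haT, zero_smul]).symm
  have hzero : ∑ a ∈ Δ, ((c a : ℝ) + d a - f a) • id a = 0 := by
    simp only [id, sub_smul, add_smul, Finset.sum_sub_distrib, Finset.sum_add_distrib, hfΔ, hf,
      sub_self]
  have hc_out : ∀ a ∈ Δ, a ∉ T → c a = 0 := fun a ha haT => by
    have h := linearIndepOn_finset_iff.mp hind _ hzero a ha
    rw [hf_out a haT, sub_zero] at h
    exact_mod_cast (add_eq_zero_iff_of_nonneg (Nat.cast_nonneg _) (Nat.cast_nonneg _)).mp h |>.1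
  exact ⟨c, (Finset.sum_subset hT fun a ha haT => by simp [hc_out a ha haT]).symm⟩

theorem IsNNComb.eq_zero_of_neg {Δ : Finset E} (hind : LinearIndepOn ℝ id (Δ : Set E)) {x : E}
    (hx : IsNNComb Δ x) (hnx : IsNNComb Δ (-x)) : x = 0 := by
  obtain ⟨c, rfl⟩ := hx.of_add_mem_span hind (Finset.empty_subset Δ) hnx (by simp)
  simp

theorem IsNNComb.exists_eq_smul_of_neg_simpleReflection {Δ : Finset E}
    (hind : LinearIndepOn ℝ id (Δ : Set E)) {a x : E} (ha : a ∈ Δ) (hx : IsNNComb Δ x)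
    (hsx : IsNNComb Δ (-simpleReflection a x)) : ∃ t : ℝ, x = t • a := by
  have hspan : x + -simpleReflection a x ∈ span ℝ ((({a} : Finset E)) : Set E) := by
    simpa [← sub_eq_add_neg] using sub_simpleReflection_mem_span a x
  obtain ⟨c, rfl⟩ := hx.of_add_mem_span hind (Finset.singleton_subset_iff.mpr ha) hsx hspan
  exact ⟨c a, Finset.sum_singleton _ _⟩

section RootSystem

variable {Φ : Set E} {Δ : Finset E}

theorem exists_shorter_wordProd_mul_simpleReflection [DecidableEq E]
    (hind : LinearIndepOn ℝ id (Δ : Set E)) (hΔΦ : ↑Δ ⊆ Φ)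
    (hbase : ∀ γ ∈ Φ, IsNNComb Δ γ ∨ IsNNComb Δ (-γ))
    (hinv : ∀ w ∈ weylSubgroup Δ, ∀ γ ∈ Φ, w γ ∈ Φ) {α : E} (hα : α ∈ Δ) :
    ∀ {l : List E}, (∀ a ∈ l, a ∈ Δ) → IsNNComb Δ (-wordProd l α) →
      ∃ l' : List E, (∀ a ∈ l', a ∈ Δ) ∧ l'.length < l.length ∧
        wordProd l' = wordProd l * simpleReflection α
  | [], _, hneg => absurd ((IsNNComb.of_mem hα).eq_zero_of_neg hind hneg) (hind.ne_zero hα)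
  | a :: l, hl, hneg => by
    have ha : a ∈ Δ := hl a List.mem_cons_self
    have hlΔ : ∀ b ∈ l, b ∈ Δ := fun b hb => hl b (List.mem_cons_of_mem a hb)
    rw [wordProd_cons, LinearEquiv.mul_apply] at hneg
    rcases hbase _ (hinv _ (wordProd_mem_weylSubgroup hlΔ) α (hΔΦ hα)) with hpos | hlneg
    · -- `s_a` makes the positive root `wordProd l α` negative, so it is a multiple of `a`,
      -- and then `s_a = wordProd l * s_α * (wordProd l)⁻¹`.
      obtain ⟨t, ht⟩ := hpos.exists_eq_smul_of_neg_simpleReflection hind ha hneg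
      have ht0 : t ≠ 0 := by
        rintro rfl
        rw [zero_smul, LinearEquiv.map_eq_zero_iff] at ht
        exact hind.ne_zero hα ht
      have hconj : simpleReflection a * wordProd l = wordProd l * simpleReflection α := by
        rw [← simpleReflection_smul ht0, ← ht]
        exact simpleReflection_map_mul _
          (inner_map_map_of_mem_weylSubgroup (wordProd_mem_weylSubgroup hlΔ)) α
      refine ⟨l, hlΔ, by simp, ?_⟩
      rw [wordProd_cons, mul_assoc, ← hconj, ← mul_assoc, simpleReflection_mul_self, one_mul]
    · obtain ⟨l', hl', hlen, heq⟩ :=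
        exists_shorter_wordProd_mul_simpleReflection hind hΔΦ hbase hinv hα hlΔ hlneg
      refine ⟨a :: l', ?_, by simpa using hlen, by rw [wordProd_cons, wordProd_cons, heq, mul_assoc]⟩
      exact fun b hb => (List.mem_cons.mp hb).elim (· ▸ ha) (hl' b)

theorem mapsTo_wordProd_of_mapsTo_posRoots [DecidableEq E]
    (hind : LinearIndepOn ℝ id (Δ : Set E)) (hΔΦ : ↑Δ ⊆ Φ)
    (hbase : ∀ γ ∈ Φ, IsNNComb Δ γ ∨ IsNNComb Δ (-γ))
    (hinv : ∀ w ∈ weylSubgroup Δ, ∀ γ ∈ Φ, w γ ∈ Φ) {X : Set E}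
    (hX : ∀ a ∈ Δ, a ∈ X ∨ MapsTo (simpleReflection a) X X) (l : List E)
    (hl : ∀ a ∈ l, a ∈ Δ) (hlX : MapsTo (wordProd l) X (posRoots Φ Δ)) :
    MapsTo (wordProd l) X X := by
  induction hlen : l.length using Nat.strong_induction_on generalizing l with
  | _ n ih =>
  rcases l.eq_nil_or_concat' with rfl | ⟨l₁, a, rfl⟩
  · simpa using mapsTo_id X
  have ha : a ∈ Δ := hl a (by simp)
  have hl₁ : ∀ b ∈ l₁, b ∈ Δ := fun b hb => hl b (by simp [hb])
  have hw : wordProd (l₁ ++ [a]) = wordProd l₁ * simpleReflection a := by simp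
  have hlen₁ : l₁.length < n := by simp [← hlen]
  by_cases hneg : IsNNComb Δ (-wordProd (l₁ ++ [a]) a)
  · have haX : a ∉ X := fun haX =>
      hind.ne_zero ha <| (wordProd _).map_eq_zero_iff.mp ((hlX haX).2.eq_zero_of_neg hind hneg)
    have hsX := (hX a ha).resolve_left haX
    have hw₁ : wordProd l₁ = wordProd (l₁ ++ [a]) * simpleReflection a := by
      rw [hw, mul_assoc, simpleReflection_mul_self, mul_one]
    have hl₁X : MapsTo (wordProd l₁) X X :=
      ih _ hlen₁ l₁ hl₁ (fun γ hγ => hw₁ ▸ hlX (hsX hγ)) rfl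
    rw [hw]
    exact fun γ hγ => hl₁X (hsX hγ)
  · have hneg₁ : IsNNComb Δ (-wordProd l₁ a) := by
      refine (hbase _ (hinv _ (wordProd_mem_weylSubgroup hl₁) a (hΔΦ ha))).resolve_left ?_
      simpa [hw, simpleReflection_self] using hneg
    obtain ⟨l', hl', hlen', heq⟩ :=
      exists_shorter_wordProd_mul_simpleReflection hind hΔΦ hbase hinv ha hl₁ hneg₁
    rw [hw, ← heq] at hlX ⊢
    exact ih _ (hlen'.trans hlen₁) l' hl' hlX rfl

theorem mem_phiRad_of_mem [DecidableEq E] (hind : LinearIndepOn ℝ id (Δ : Set E))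
    (hΔΦ : ↑Δ ⊆ Φ) {S : Finset E} {a : E} (ha : a ∈ Δ) (haS : a ∈ S) : a ∈ phiRad Φ Δ S := by
  refine ⟨⟨hΔΦ ha, .of_mem ha⟩, fun h => ?_⟩
  have hindS : LinearIndepOn ℝ id (↑(Δ \ S) : Set E) := hind.mono (by simp)
  refine (hindS.notMem_span_iff_id.mpr ⟨hind.mono ?_, by simp [haS]⟩) h.mem_span
  simpa [insert_subset_iff] using ha

theorem mapsTo_simpleReflection_phiRad [DecidableEq E] (hind : LinearIndepOn ℝ id (Δ : Set E))
    (hbase : ∀ γ ∈ Φ, IsNNComb Δ γ ∨ IsNNComb Δ (-γ))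
    (hinv : ∀ w ∈ weylSubgroup Δ, ∀ γ ∈ Φ, w γ ∈ Φ) {S : Finset E} {a : E} (ha : a ∈ Δ)
    (haS : a ∉ S) : MapsTo (simpleReflection a) (phiRad Φ Δ S) (phiRad Φ Δ S) := by
  rintro γ ⟨⟨hγΦ, hγ⟩, hγS⟩
  have hT : Δ \ S ⊆ Δ := Finset.sdiff_subset
  have hdiff : γ - simpleReflection a γ ∈ span ℝ (↑(Δ \ S) : Set E) :=
    span_singleton_le_iff_mem _ _ |>.mpr (subset_span (by simp [ha, haS]))
      (sub_simpleReflection_mem_span a γ)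
  have hsΦ : simpleReflection a γ ∈ Φ := hinv _ (simpleReflection_mem_weylSubgroup ha) γ hγΦ
  have hspos : IsNNComb Δ (simpleReflection a γ) := (hbase _ hsΦ).resolve_right fun hneg =>
    hγS (hγ.of_add_mem_span hind hT hneg (by rwa [← sub_eq_add_neg]))
  refine ⟨⟨hsΦ, hspos⟩, fun hs => hγS (hγ.of_add_mem_span hind hT (.zero Δ) ?_)⟩
  simpa using add_mem hs.mem_span hdiff

end RootSystem

theorem phiRad_not_conjugate_general
    (Φ : Set V) (Δ : Finset V)
    (hfin : Φ.Finite) (hΔΦ : ↑Δ ⊆ Φ)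
    (hind : LinearIndependent ℝ (fun a : Δ => (a : V)))
    (hbase : ∀ γ ∈ Φ, IsNNComb Δ γ ∨ IsNNComb Δ (-γ))
    (hinv : ∀ w ∈ weylSubgroup Δ, ∀ γ ∈ Φ, w γ ∈ Φ)
    (S : Finset V)
    (R : Set V) (hR : R ⊆ posRoots Φ Δ)
    (w : V ≃ₗ[ℝ] V) (hw : w ∈ weylSubgroup Δ)
    (hwR : (fun x => w x) '' phiRad Φ Δ S = R) :
    R = phiRad Φ Δ S := by
  have hind' : LinearIndepOn ℝ id (Δ : Set V) := hind
  obtain ⟨l, hl, rfl⟩ := exists_wordProd_eq hw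
  subst hwR
  have hrad : MapsTo (wordProd l) (phiRad Φ Δ S) (phiRad Φ Δ S) :=
    mapsTo_wordProd_of_mapsTo_posRoots hind' hΔΦ hbase hinv
      (fun a ha => (em (a ∈ S)).imp (mem_phiRad_of_mem hind' hΔΦ ha)
        (mapsTo_simpleReflection_phiRad hind' hbase hinv ha))
      l hl (fun γ hγ => hR (mem_image_of_mem _ hγ))
  exact eq_of_subset_of_ncard_le hrad.image_subset
    (ncard_image_of_injective _ (wordProd l).injective).ge (hfin.subset fun γ hγ => hγ.1.1)

/-- `Φ^rad(S)` is not `W`-conjugate to any other set of positive roots: if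
`w(Φ^rad(S)) = R` for some `w ∈ W` and some set `R` of positive roots, then
`R = Φ^rad(S)`. -/
theorem phiRad_not_conjugate
    (Φ : Set V) (Δ : Finset V)
    (hfin : Φ.Finite) (h0 : (0 : V) ∉ Φ) (hΔΦ : ↑Δ ⊆ Φ)
    (hind : LinearIndependent ℝ (fun a : Δ => (a : V)))
    (hbase : ∀ γ ∈ Φ, IsNNComb Δ γ ∨ IsNNComb Δ (-γ))
    (hinv : ∀ w ∈ weylSubgroup Δ, ∀ γ ∈ Φ, w γ ∈ Φ)
    (S : Finset V) (hS : S ⊆ Δ)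
    (R : Set V) (hR : R ⊆ posRoots Φ Δ)
    (w : V ≃ₗ[ℝ] V) (hw : w ∈ weylSubgroup Δ)
    (hwR : (fun x => w x) '' phiRad Φ Δ S = R) :
    R = phiRad Φ Δ S :=
  phiRad_not_conjugate_general Φ Δ hfin hΔΦ hind hbase hinv S R hR w hw hwR
end

section
/- Let g and h be finite-dimensional restricted Lie algebras over a field of characteristic p, and let r and s be the maximal dimensions of elementary subalgebras of g and h respectively. Then the maximal dimension of an elementary subalgebra of g ⊕ h is r + s. -/
set_option autoImplicit false

open Module

/-- A restricted Lie algebra over `k` in characteristic `p`: a Lie algebra equipped with a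
`p`-operation `x ↦ x^[p]`. -/
class RestrictedLieAlgebra (p : ℕ) (k : Type*) (L : Type*)
    [CommRing k] [LieRing L] [LieAlgebra k L] : Type _ where
  /-- The `p`-operation. -/
  pmap : L → L
  pmap_zero : pmap 0 = 0
  pmap_smul : ∀ (a : k) (x : L), pmap (a • x) = a ^ p • pmap x
  lie_pmap : ∀ x y : L, ⁅pmap x, y⁆ = ((LieAlgebra.ad k L x) ^ p) y

variable (p : ℕ) (k : Type*) {L M : Type*}

section

variable [CommRing k] [LieRing L] [LieAlgebra k L] [RestrictedLieAlgebra p k L]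

/-- An elementary subalgebra: a Lie subalgebra that is abelian and on which the
`p`-operation vanishes identically. -/
def LieSubalgebra.IsElementary (E : LieSubalgebra k L) : Prop :=
  (∀ x ∈ E, ∀ y ∈ E, ⁅x, y⁆ = (0 : L)) ∧
    ∀ x ∈ E, RestrictedLieAlgebra.pmap p k x = (0 : L)

end

section Prod

variable [CommRing k] [LieRing L] [LieAlgebra k L] [LieRing M] [LieAlgebra k M]

instance : LieRing (L × M) :=
  { (inferInstance : AddCommGroup (L × M)) with
    bracket := fun x y => (⁅x.1, y.1⁆, ⁅x.2, y.2⁆)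
    add_lie := fun x y z => Prod.ext (add_lie x.1 y.1 z.1) (add_lie x.2 y.2 z.2)
    lie_add := fun x y z => Prod.ext (lie_add x.1 y.1 z.1) (lie_add x.2 y.2 z.2)
    lie_self := fun x => Prod.ext (lie_self x.1) (lie_self x.2)
    leibniz_lie := fun x y z =>
      Prod.ext (leibniz_lie x.1 y.1 z.1) (leibniz_lie x.2 y.2 z.2) }

instance : LieAlgebra k (L × M) :=
  { (inferInstance : Module k (L × M)) with
    lie_smul := fun t x y => Prod.ext (lie_smul t x.1 y.1) (lie_smul t x.2 y.2) }

instance [RestrictedLieAlgebra p k L] [RestrictedLieAlgebra p k M] :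
    RestrictedLieAlgebra p k (L × M) where
  pmap x := (RestrictedLieAlgebra.pmap p k x.1, RestrictedLieAlgebra.pmap p k x.2)
  pmap_zero := by simp [RestrictedLieAlgebra.pmap_zero]
  pmap_smul a x := by
    ext <;> simp [RestrictedLieAlgebra.pmap_smul]
  lie_pmap x y := by
    have key : ∀ (n : ℕ) (z : L × M),
        ((LieAlgebra.ad k (L × M) x) ^ n) z
          = (((LieAlgebra.ad k L x.1) ^ n) z.1, ((LieAlgebra.ad k M x.2) ^ n) z.2) := by
      intro n
      induction n with
      | zero => intro z; rfl
      | succ n ih =>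
          intro z
          rw [pow_succ, pow_succ, pow_succ]
          simp only [Module.End.mul_apply, LieAlgebra.ad_apply]
          exact ih ⁅x, z⁆
    rw [key p y]
    exact Prod.ext (RestrictedLieAlgebra.lie_pmap x.1 y.1)
      (RestrictedLieAlgebra.lie_pmap x.2 y.2)

/-- The first projection `L × M → L` as a morphism of Lie algebras. -/
def fstLieHom : L × M →ₗ⁅k⁆ L :=
  { LinearMap.fst k L M with map_lie' := rfl }

/-- The second projection `L × M → M` as a morphism of Lie algebras. -/
def sndLieHom : L × M →ₗ⁅k⁆ M :=
  { LinearMap.snd k L M with map_lie' := rfl }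

end Prod

/-! An elementary subalgebra of `L × M` lies in the product of its two projections, which are
elementary because the projections commute with brackets and `p`-maps; conversely the product of
elementary subalgebras is elementary. Since dimensions add over products, both bounds follow. -/

variable {p k}

def Submodule.prodEquiv [Semiring k] [AddCommMonoid L] [Module k L] [AddCommMonoid M]
    [Module k M] (E : Submodule k L) (F : Submodule k M) : ↥(E.prod F) ≃ₗ[k] E × F where
  toFun x := (⟨x.1.1, x.2.1⟩, ⟨x.1.2, x.2.2⟩)
  invFun y := ⟨(y.1.1, y.2.1), ⟨y.1.2, y.2.2⟩⟩
  left_inv _ := rfl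
  right_inv _ := rfl
  map_add' _ _ := rfl
  map_smul' _ _ := rfl

section Submodule

variable [DivisionRing k] [AddCommGroup L] [Module k L] [AddCommGroup M] [Module k M]
  [FiniteDimensional k L] [FiniteDimensional k M]

theorem Submodule.finrank_prod (E : Submodule k L) (F : Submodule k M) :
    finrank k ↥(E.prod F) = finrank k E + finrank k F := by
  rw [(E.prodEquiv F).finrank_eq, Module.finrank_prod]

theorem Submodule.finrank_le_finrank_map_fst_add_finrank_map_snd (N : Submodule k (L × M)) :
    finrank k N ≤
      finrank k (N.map (LinearMap.fst k L M)) + finrank k (N.map (LinearMap.snd k L M)) :=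
  calc finrank k N
      ≤ finrank k ↥((N.map (LinearMap.fst k L M)).prod (N.map (LinearMap.snd k L M))) :=
        Submodule.finrank_mono fun x hx => ⟨⟨x, hx, rfl⟩, ⟨x, hx, rfl⟩⟩
    _ = _ := Submodule.finrank_prod _ _

end Submodule

namespace LieSubalgebra

variable [CommRing k] [LieRing L] [LieAlgebra k L] [LieRing M] [LieAlgebra k M]

def prod (E : LieSubalgebra k L) (F : LieSubalgebra k M) : LieSubalgebra k (L × M) :=
  { E.toSubmodule.prod F.toSubmodule with
    lie_mem' := fun hx hy => ⟨E.lie_mem hx.1 hy.1, F.lie_mem hx.2 hy.2⟩ }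

variable [RestrictedLieAlgebra p k L] [RestrictedLieAlgebra p k M]

theorem IsElementary.prod {E : LieSubalgebra k L} {F : LieSubalgebra k M}
    (hE : E.IsElementary p) (hF : F.IsElementary p) : (E.prod F).IsElementary p :=
  ⟨fun _ hx _ hy => Prod.ext (hE.1 _ hx.1 _ hy.1) (hF.1 _ hx.2 _ hy.2),
    fun _ hx => Prod.ext (hE.2 _ hx.1) (hF.2 _ hx.2)⟩

theorem IsElementary.map {E : LieSubalgebra k L} (hE : E.IsElementary p) (f : L →ₗ⁅k⁆ M)
    (hf : ∀ x, RestrictedLieAlgebra.pmap p k (f x) = f (RestrictedLieAlgebra.pmap p k x)) :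
    (E.map f).IsElementary p := by
  constructor
  · rintro _ ⟨x, hx, rfl⟩ _ ⟨y, hy, rfl⟩
    change ⁅f x, f y⁆ = 0
    rw [← f.map_lie, hE.1 x hx y hy, map_zero]
  · rintro _ ⟨x, hx, rfl⟩
    change RestrictedLieAlgebra.pmap p k (f x) = 0
    rw [hf, hE.2 x hx, map_zero]

end LieSubalgebra

theorem max_elementary_dim_prod_general
    {p : ℕ} {k L M : Type*} [Field k]
    [LieRing L] [LieAlgebra k L] [LieRing M] [LieAlgebra k M]
    [FiniteDimensional k L] [FiniteDimensional k M]
    [RestrictedLieAlgebra p k L] [RestrictedLieAlgebra p k M]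
    (r s : ℕ)
    (hr₁ : ∃ E : LieSubalgebra k L, E.IsElementary p ∧ Module.finrank k E = r)
    (hr₂ : ∀ E : LieSubalgebra k L, E.IsElementary p → Module.finrank k E ≤ r)
    (hs₁ : ∃ F : LieSubalgebra k M, F.IsElementary p ∧ Module.finrank k F = s)
    (hs₂ : ∀ F : LieSubalgebra k M, F.IsElementary p → Module.finrank k F ≤ s) :
    (∃ E : LieSubalgebra k (L × M), E.IsElementary p ∧ Module.finrank k E = r + s) ∧
      ∀ E : LieSubalgebra k (L × M), E.IsElementary p → Module.finrank k E ≤ r + s := by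
  obtain ⟨E, hE, rfl⟩ := hr₁
  obtain ⟨F, hF, rfl⟩ := hs₁
  refine ⟨⟨E.prod F, hE.prod hF, Submodule.finrank_prod E.toSubmodule F.toSubmodule⟩,
    fun G hG => ?_⟩
  calc finrank k G
      ≤ finrank k (G.map (fstLieHom k)) + finrank k (G.map (sndLieHom k)) :=
        Submodule.finrank_le_finrank_map_fst_add_finrank_map_snd G.toSubmodule
    _ ≤ finrank k E + finrank k F :=
        add_le_add (hr₂ _ (hG.map _ fun _ => rfl)) (hs₂ _ (hG.map _ fun _ => rfl))

/-- If `r` and `s` are the maximal dimensions of elementary subalgebras of the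
finite-dimensional restricted Lie algebras `g` and `h`, then the maximal dimension of an
elementary subalgebra of `g ⊕ h` is `r + s`. -/
theorem max_elementary_dim_prod
    {p : ℕ} (hp : 0 < p) {k L M : Type*} [Field k] [CharP k p]
    [LieRing L] [LieAlgebra k L] [LieRing M] [LieAlgebra k M]
    [FiniteDimensional k L] [FiniteDimensional k M]
    [RestrictedLieAlgebra p k L] [RestrictedLieAlgebra p k M]
    (r s : ℕ)
    (hr₁ : ∃ E : LieSubalgebra k L, E.IsElementary p ∧ Module.finrank k E = r)
    (hr₂ : ∀ E : LieSubalgebra k L, E.IsElementary p → Module.finrank k E ≤ r)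
    (hs₁ : ∃ F : LieSubalgebra k M, F.IsElementary p ∧ Module.finrank k F = s)
    (hs₂ : ∀ F : LieSubalgebra k M, F.IsElementary p → Module.finrank k F ≤ s) :
    (∃ E : LieSubalgebra k (L × M), E.IsElementary p ∧ Module.finrank k E = r + s) ∧
      ∀ E : LieSubalgebra k (L × M), E.IsElementary p → Module.finrank k E ≤ r + s :=
  max_elementary_dim_prod_general r s hr₁ hr₂ hs₁ hs₂
end
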